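/- arXiv:2205.13706 — 4 statements merged into one kernel-verified Lean document; each statement's English description precedes it below -/
import Mathlib

section
/- Let ϱ : ℝ² → ℝ be nonnegative, integrable with ∫ ϱ = κ > 0, supported in B_{rε}(x̂) where x̂ = (0, i₀/κ), r, ε, i₀ > 0 and 4rε ≤ i₀/κ. Then E(ϱ) := (1/(4π)) ∬ ln(|x − ȳ|/|x − y|) ϱ(x) ϱ(y) dx dy ≥ (κ²/(4π)) ln(i₀/(2rκε)). -/
open MeasureTheory

/-- The upper half-plane. -/
def UHP : Set (ℝ × ℝ) := {x | 0 < x.2}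

/-- Euclidean norm on ℝ². -/
noncomputable def nrm (x : ℝ × ℝ) : ℝ := Real.sqrt (x.1 ^ 2 + x.2 ^ 2)

/-!
Two points of the disc of radius `rε` about `(0, i₀/κ)` are at most `2rε` apart, while the
distance from one to the mirror image of the other is at least the sum of their heights, hence at
least `i₀/κ`. So off the diagonal the kernel is at least `ln(i₀/(2rκε))`; the diagonal is null, and
integrating this bound against `ϱ ⊗ ϱ` gives `κ²` times it.
-/

lemma nrm_eq_norm_equivRealProd_symm (p : ℝ × ℝ) :
    nrm p = ‖Complex.equivRealProdCLM.symm p‖ := by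
  rw [nrm, Complex.norm_def, Complex.normSq_apply]
  simp [sq]

lemma nrm_sub_le (a b : ℝ × ℝ) : nrm (a - b) ≤ nrm a + nrm b := by
  simp only [nrm_eq_norm_equivRealProd_symm, map_sub]
  exact norm_sub_le _ _

lemma nrm_pos {p : ℝ × ℝ} (hp : p ≠ 0) : 0 < nrm p := by
  rw [nrm_eq_norm_equivRealProd_symm, norm_pos_iff]
  simpa using hp

lemma abs_snd_le_nrm (p : ℝ × ℝ) : |p.2| ≤ nrm p := by
  simpa [nrm_eq_norm_equivRealProd_symm] using
    Complex.abs_im_le_norm (Complex.equivRealProdCLM.symm p)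

lemma le_snd_of_nrm_sub_le {p : ℝ × ℝ} {a h δ : ℝ} (hp : nrm (p - (a, h)) ≤ δ) : h - δ ≤ p.2 := by
  have := (abs_le.1 ((abs_snd_le_nrm _).trans hp)).1
  simp only [Prod.snd_sub] at this
  linarith

lemma nrm_sub_le_of_nrm_sub_le {x y c : ℝ × ℝ} {δ : ℝ} (hx : nrm (x - c) ≤ δ)
    (hy : nrm (y - c) ≤ δ) : nrm (x - y) ≤ 2 * δ := by
  calc nrm (x - y) = nrm ((x - c) - (y - c)) := by rw [sub_sub_sub_cancel_right]
    _ ≤ nrm (x - c) + nrm (y - c) := nrm_sub_le _ _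
    _ ≤ 2 * δ := by linarith

lemma snd_add_snd_le_nrm_sub_reflect (x y : ℝ × ℝ) : x.2 + y.2 ≤ nrm (x - (y.1, -y.2)) := by
  have := (le_abs_self _).trans (abs_snd_le_nrm (x - (y.1, -y.2)))
  simpa using this

lemma log_div_le_log_nrm_reflect_div_nrm {x y : ℝ × ℝ} {a h δ : ℝ} (hh : 0 < h)
    (hδ : 2 * δ ≤ h) (hx : nrm (x - (a, h)) ≤ δ) (hy : nrm (y - (a, h)) ≤ δ) (hxy : x ≠ y) :
    Real.log (h / (2 * δ)) ≤ Real.log (nrm (x - (y.1, -y.2)) / nrm (x - y)) := by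
  have hnear := nrm_sub_le_of_nrm_sub_le hx hy
  have hpos : 0 < nrm (x - y) := nrm_pos (sub_ne_zero.2 hxy)
  have hfar : h ≤ nrm (x - (y.1, -y.2)) := by
    linarith [le_snd_of_nrm_sub_le hx, le_snd_of_nrm_sub_le hy, snd_add_snd_le_nrm_sub_reflect x y]
  apply Real.log_le_log (div_pos hh (hpos.trans_le hnear))
  exact div_le_div₀ (hh.le.trans hfar) hfar hpos hnear

lemma mul_sq_integral_le_integral_integral {α : Type*} [MeasurableSpace α] {μ : Measure α}
    [SFinite μ] [NullSingletonClass μ] {k : α → α → ℝ} {g : α → ℝ} {c : ℝ} (hg0 : 0 ≤ g)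
    (hg : Integrable g μ) (hkg : Integrable (fun z : α × α => k z.1 z.2 * g z.1 * g z.2) (μ.prod μ))
    (hk : ∀ x ∈ Function.support g, ∀ y ∈ Function.support g, x ≠ y → c ≤ k x y) :
    c * (∫ x, g x ∂μ) ^ 2 ≤ ∫ x, ∫ y, k x y * g x * g y ∂μ ∂μ := by
  have hpoint : ∀ x y, x ≠ y → c * g x * g y ≤ k x y * g x * g y := by
    intro x y hxy
    by_cases hx : g x = 0
    · simp [hx]
    by_cases hy : g y = 0
    · simp [hy]
    simp only [mul_assoc]
    exact mul_le_mul_of_nonneg_right (hk x hx y hy hxy) (mul_nonneg (hg0 x) (hg0 y))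
  have hinner : ∀ᵐ x ∂μ, c * g x * ∫ y, g y ∂μ ≤ ∫ y, k x y * g x * g y ∂μ := by
    filter_upwards [hkg.prod_right_ae] with x hx
    rw [← integral_const_mul]
    refine integral_mono_ae (hg.const_mul _) hx ?_
    filter_upwards [μ.ae_ne x] with y hy using hpoint x y hy.symm
  calc c * (∫ x, g x ∂μ) ^ 2 = ∫ x, c * g x * ∫ y, g y ∂μ ∂μ := by
        rw [integral_mul_const, integral_const_mul]; ring
    _ ≤ ∫ x, ∫ y, k x y * g x * g y ∂μ ∂μ :=
        integral_mono_ae ((hg.const_mul c).mul_const _) hkg.integral_prod_left hinner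

theorem energy_lower_bound_general (ϱ : ℝ × ℝ → ℝ) (κ i₀ r ε : ℝ)
    (hκ : 0 < κ) (hi₀ : 0 < i₀)
    (hnonneg : ∀ x, 0 ≤ ϱ x) (hint : Integrable ϱ)
    (hmass : ∫ x, ϱ x = κ)
    (hsupp : Function.support ϱ ⊆ {x : ℝ × ℝ | nrm (x - (0, i₀ / κ)) ≤ r * ε})
    (hsmall : 4 * r * ε ≤ i₀ / κ)
    (hE : IntegrableOn (fun z : (ℝ × ℝ) × (ℝ × ℝ) =>
        Real.log (nrm (z.1 - (z.2.1, -z.2.2)) / nrm (z.1 - z.2)) * ϱ z.1 * ϱ z.2)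
      (UHP ×ˢ UHP)) :
    (1 / (4 * Real.pi)) * ∫ x in UHP, ∫ y in UHP,
        Real.log (nrm (x - (y.1, -y.2)) / nrm (x - y)) * ϱ x * ϱ y
      ≥ (κ ^ 2 / (4 * Real.pi)) * Real.log (i₀ / (2 * r * κ * ε)) := by
  have hh : 0 < i₀ / κ := div_pos hi₀ hκ
  have hsuppU : Function.support ϱ ⊆ UHP := fun x hx =>
    show 0 < x.2 by linarith [le_snd_of_nrm_sub_le (hsupp hx)]
  have hmassU : ∫ x in UHP, ϱ x = κ := by
    rw [setIntegral_eq_integral_of_forall_compl_eq_zero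
      fun x hx => Function.notMem_support.1 fun hs => hx (hsuppU hs)]
    exact hmass
  have hE_prod : Integrable (fun z : (ℝ × ℝ) × (ℝ × ℝ) =>
      Real.log (nrm (z.1 - (z.2.1, -z.2.2)) / nrm (z.1 - z.2)) * ϱ z.1 * ϱ z.2)
      ((volume.restrict UHP).prod (volume.restrict UHP)) := by
    rwa [Measure.prod_restrict, ← Measure.volume_eq_prod]
  have hbound := mul_sq_integral_le_integral_integral (hg0 := hnonneg) hint.restrict hE_prod
    fun x hx y hy hxy =>
      log_div_le_log_nrm_reflect_div_nrm hh (by linarith) (hsupp hx) (hsupp hy) hxy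
  rw [hmassU] at hbound
  rw [show i₀ / (2 * r * κ * ε) = i₀ / κ / (2 * (r * ε)) by ring, ge_iff_le,
    show ∀ a : ℝ, κ ^ 2 / (4 * Real.pi) * a = 1 / (4 * Real.pi) * (a * κ ^ 2) by intro; ring]
  gcongr

theorem energy_lower_bound (ϱ : ℝ × ℝ → ℝ) (κ i₀ r ε : ℝ)
    (hκ : 0 < κ) (hi₀ : 0 < i₀) (hr : 0 < r) (hε : 0 < ε)
    (hnonneg : ∀ x, 0 ≤ ϱ x) (hint : Integrable ϱ)
    (hmass : ∫ x, ϱ x = κ)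
    (hsupp : Function.support ϱ ⊆ {x : ℝ × ℝ | nrm (x - (0, i₀ / κ)) ≤ r * ε})
    (hsmall : 4 * r * ε ≤ i₀ / κ)
    (hE : IntegrableOn (fun z : (ℝ × ℝ) × (ℝ × ℝ) =>
        Real.log (nrm (z.1 - (z.2.1, -z.2.2)) / nrm (z.1 - z.2)) * ϱ z.1 * ϱ z.2)
      (UHP ×ˢ UHP)) :
    (1 / (4 * Real.pi)) * ∫ x in UHP, ∫ y in UHP,
        Real.log (nrm (x - (y.1, -y.2)) / nrm (x - y)) * ϱ x * ϱ y
      ≥ (κ ^ 2 / (4 * Real.pi)) * Real.log (i₀ / (2 * r * κ * ε)) :=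
  energy_lower_bound_general ϱ κ i₀ r ε hκ hi₀ hnonneg hint hmass hsupp hsmall hE
end

section
/- Let ϱ be a nonnegative function in L¹(ℝ²) with ∫ ln(1/|y|) ϱ(y) dy finite, let ε ∈ (0,1], and let ζ(y) = ε^{-2} ϱ((y − z)/ε) be a scaled translate (z ∈ ℝ²). If ϱ is radially symmetric and decreasing, then for every x ∈ ℝ², ∫ ln(ε/|x − y|) ζ(y) dy ≤ ∫_{ℝ²} ln(1/|y|) ϱ(y) dy. -/
/-!
Write `log (1/|w - a|) = ∫₀^∞ (1{|w - a| < e^{-t}} - 1{|w - a| > e^t}) dt`. By Fubini the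
potential of `ϱ` at `a` becomes `∫₀^∞ (ϱ{|w - a| < e^{-t}} - ϱ{|w - a| > e^t}) dt`, where
`ϱ A` is the `ϱ`-mass of `A`. For radially decreasing `ϱ` a centred disk carries at least as much
mass as any translate of it (bathtub principle: `ϱ ≥ ϱ(r, 0)` on `B(0, r)`, `ϱ ≤ ϱ(r, 0)` off
it, and translates have the same area), so the integrand is largest at `a = 0`. The
substitution `y = ε w + z` turns the scaled potential at `x` into the potential of `ϱ` at
`(x - z) / ε`.
-/

open MeasureTheory

open Real Set

lemma nrm_nonneg (x : ℝ × ℝ) : 0 ≤ nrm x := sqrt_nonneg _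

lemma nrm_eq_zero {x : ℝ × ℝ} : nrm x = 0 ↔ x = 0 := by
  rw [nrm, sqrt_eq_zero (by positivity), Prod.ext_iff, Prod.fst_zero, Prod.snd_zero]
  constructor
  · intro h
    constructor <;> nlinarith [sq_nonneg x.1, sq_nonneg x.2]
  · rintro ⟨h1, h2⟩
    simp [h1, h2]

lemma nrm_sub_comm (x y : ℝ × ℝ) : nrm (x - y) = nrm (y - x) := by
  simp only [nrm, Prod.fst_sub, Prod.snd_sub]
  ring_nf

lemma nrm_smul {c : ℝ} (hc : 0 ≤ c) (x : ℝ × ℝ) : nrm (c • x) = c * nrm x := by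
  have h : (c • x).1 ^ 2 + (c • x).2 ^ 2 = c ^ 2 * (x.1 ^ 2 + x.2 ^ 2) := by
    simp only [Prod.smul_fst, Prod.smul_snd, smul_eq_mul]; ring
  rw [nrm, nrm, h, sqrt_mul (sq_nonneg c), sqrt_sq hc]

lemma nrm_mk_zero {r : ℝ} (hr : 0 ≤ r) : nrm (r, 0) = r := by
  simp [nrm, sqrt_sq hr]

@[fun_prop]
lemma continuous_nrm : Continuous nrm := by
  unfold nrm; fun_prop

lemma norm_le_nrm (x : ℝ × ℝ) : ‖x‖ ≤ nrm x :=
  max_le (abs_le_sqrt (by nlinarith [sq_nonneg x.2])) (abs_le_sqrt (by nlinarith [sq_nonneg x.1]))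

lemma volume_nrm_le_ne_top (r : ℝ) : volume {w : ℝ × ℝ | nrm w ≤ r} ≠ ⊤ :=
  ne_top_of_le_ne_top measure_closedBall_lt_top.ne <| measure_mono fun w hw =>
    mem_closedBall_zero_iff.2 ((norm_le_nrm w).trans hw)

theorem setIntegral_le_setIntegral_of_measure_eq {α : Type*} [MeasurableSpace α] {μ : Measure α}
    {f : α → ℝ} (hf : Integrable f μ) {s t : Set α} (hs : MeasurableSet s) (ht : MeasurableSet t)
    (hμ : μ t = μ s) (hμs : μ s ≠ ⊤) (c : ℝ) (hfs : ∀ x ∈ s, c ≤ f x) (hft : ∀ x ∉ s, f x ≤ c) :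
    ∫ x in t, f x ∂μ ≤ ∫ x in s, f x ∂μ := by
  have hts : μ (t \ s) = μ (s \ t) := by
    have hfin : μ (t ∩ s) ≠ ⊤ := ne_top_of_le_ne_top hμs (measure_mono inter_subset_right)
    refine (ENNReal.add_right_inj hfin).1 ?_
    rw [measure_inter_add_sdiff t hs, inter_comm, measure_inter_add_sdiff s ht, hμ]
  have hμts : μ (t \ s) ≠ ⊤ := hts ▸ ne_top_of_le_ne_top hμs (measure_mono sdiff_subset)
  calc ∫ x in t, f x ∂μ = (∫ x in t ∩ s, f x ∂μ) + ∫ x in t \ s, f x ∂μ :=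
        (integral_inter_add_sdiff hs hf.integrableOn).symm
    _ ≤ (∫ x in s ∩ t, f x ∂μ) + c * μ.real (t \ s) := by
        rw [inter_comm]
        gcongr
        rw [mul_comm, ← smul_eq_mul, ← setIntegral_const]
        exact setIntegral_mono_on hf.integrableOn (integrableOn_const hμts) (ht.diff hs)
          fun x hx => hft x hx.2
    _ ≤ (∫ x in s ∩ t, f x ∂μ) + ∫ x in s \ t, f x ∂μ := by
        rw [measureReal_def, hts, ← measureReal_def]
        gcongr
        exact setIntegral_ge_of_const_le_real (hs.diff ht) (hts ▸ hμts) (fun x hx => hfs x hx.1)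
          hf.integrableOn
    _ = ∫ x in s, f x ∂μ := integral_inter_add_sdiff ht hf.integrableOn

lemma integrableOn_Ioi_indicator_Iio (b : ℝ) :
    IntegrableOn ((Iio b).indicator (1 : ℝ → ℝ)) (Ioi 0) := by
  rw [IntegrableOn, integrable_indicator_iff measurableSet_Iio]
  refine integrableOn_const
    (ne_top_of_le_ne_top (measure_Ioo_lt_top (μ := volume) (a := 0) (b := b)).ne ?_)
  rw [Measure.restrict_apply measurableSet_Iio, inter_comm, Ioi_inter_Iio]

lemma integral_Ioi_indicator_Iio (b : ℝ) :
    ∫ t in Ioi 0, (Iio b).indicator (1 : ℝ → ℝ) t = b⁺ := by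
  rw [setIntegral_indicator measurableSet_Iio, Ioi_inter_Iio]
  simp only [Pi.one_apply]
  rw [setIntegral_const, volume_real_Ioo, smul_eq_mul, mul_one, sub_zero]
  rfl

/-- The integrand of the layer-cake formula `log (1/s) = ∫₀^∞ logLayer s t dt`. -/
noncomputable def logLayer (s t : ℝ) : ℝ :=
  (if s < exp (-t) then 1 else 0) - (if exp t < s then 1 else 0)

lemma measurable_logLayer : Measurable (Function.uncurry logLayer) := by
  unfold logLayer Function.uncurry
  refine Measurable.sub (Measurable.ite ?_ measurable_const measurable_const)
    (Measurable.ite ?_ measurable_const measurable_const)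
  · exact measurableSet_lt measurable_fst (by fun_prop)
  · exact measurableSet_lt (by fun_prop) measurable_fst

lemma logLayer_eq_indicator {s : ℝ} (hs : 0 < s) (t : ℝ) :
    logLayer s t = (Iio (log (1 / s))).indicator 1 t - (Iio (-log (1 / s))).indicator 1 t := by
  have h₁ : s < exp (-t) ↔ t < log (1 / s) := by
    rw [← log_lt_iff_lt_exp hs, one_div, log_inv, lt_neg]
  have h₂ : exp t < s ↔ t < -log (1 / s) := by
    rw [← lt_log_iff_exp_lt hs, one_div, log_inv, neg_neg]
  simp only [logLayer, indicator_apply, mem_Iio, Pi.one_apply, h₁, h₂]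

lemma integrableOn_logLayer {s : ℝ} (hs : 0 < s) : IntegrableOn (logLayer s) (Ioi 0) := by
  rw [funext (logLayer_eq_indicator hs)]
  exact (integrableOn_Ioi_indicator_Iio _).sub (integrableOn_Ioi_indicator_Iio _)

lemma integral_logLayer {s : ℝ} (hs : 0 < s) : ∫ t in Ioi 0, logLayer s t = log (1 / s) := by
  rw [funext (logLayer_eq_indicator hs), integral_sub (integrableOn_Ioi_indicator_Iio _)
    (integrableOn_Ioi_indicator_Iio _), integral_Ioi_indicator_Iio, integral_Ioi_indicator_Iio,
    posPart_neg, posPart_sub_negPart]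

lemma integral_abs_logLayer {s : ℝ} (hs : 0 < s) :
    ∫ t in Ioi 0, |logLayer s t| = |log (1 / s)| := by
  have h : ∀ t ∈ Ioi (0 : ℝ), |logLayer s t|
      = (Iio (log (1 / s))).indicator 1 t + (Iio (-log (1 / s))).indicator 1 t := by
    intro t (ht : 0 < t)
    rw [logLayer_eq_indicator hs]
    simp only [indicator_apply, mem_Iio, Pi.one_apply]
    split_ifs <;> first | linarith | norm_num
  rw [setIntegral_congr_fun measurableSet_Ioi h, integral_add (integrableOn_Ioi_indicator_Iio _)
    (integrableOn_Ioi_indicator_Iio _), integral_Ioi_indicator_Iio, integral_Ioi_indicator_Iio,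
    posPart_neg, posPart_add_negPart]

section LayerCake

variable {ϱ : ℝ × ℝ → ℝ} (a : ℝ × ℝ)

lemma ae_nrm_sub_pos : ∀ᵐ w : ℝ × ℝ, 0 < nrm (w - a) := by
  filter_upwards [Measure.ae_ne volume a] with w hw
  exact (nrm_nonneg _).lt_of_ne' (nrm_eq_zero.not.2 (sub_ne_zero.2 hw))

lemma integrable_logLayer_mul (hϱ : AEStronglyMeasurable ϱ)
    (hK : Integrable fun w => log (1 / nrm (w - a)) * ϱ w) :
    Integrable (Function.uncurry fun w t => logLayer (nrm (w - a)) t * ϱ w)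
      (volume.prod (volume.restrict (Ioi 0))) := by
  have hmeas : AEStronglyMeasurable (Function.uncurry fun w t => logLayer (nrm (w - a)) t * ϱ w)
      (volume.prod (volume.restrict (Ioi 0))) :=
    (measurable_logLayer.comp ((continuous_nrm.measurable.comp (measurable_fst.sub_const a)).prodMk
      measurable_snd)).aestronglyMeasurable.mul hϱ.comp_fst
  refine (integrable_prod_iff hmeas).2 ⟨?_, ?_⟩
  · filter_upwards [ae_nrm_sub_pos a] with w hw
    exact (integrableOn_logLayer hw).mul_const (ϱ w)
  · refine hK.norm.congr ?_
    filter_upwards [ae_nrm_sub_pos a] with w hw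
    simp only [Function.uncurry_apply_pair, norm_mul, Real.norm_eq_abs, integral_mul_const,
      integral_abs_logLayer hw]

lemma integral_log_mul_eq_integral_layers (hϱ : AEStronglyMeasurable ϱ)
    (hK : Integrable fun w => log (1 / nrm (w - a)) * ϱ w) :
    ∫ w, log (1 / nrm (w - a)) * ϱ w = ∫ t in Ioi 0, ∫ w, logLayer (nrm (w - a)) t * ϱ w := by
  calc ∫ w, log (1 / nrm (w - a)) * ϱ w
      = ∫ w, ∫ t in Ioi 0, logLayer (nrm (w - a)) t * ϱ w := by
        refine integral_congr_ae ?_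
        filter_upwards [ae_nrm_sub_pos a] with w hw
        rw [integral_mul_const, integral_logLayer hw]
    _ = _ := integral_integral_swap (integrable_logLayer_mul a hϱ hK)

lemma integral_logLayer_mul (hint : Integrable ϱ) (t : ℝ) :
    ∫ w, logLayer (nrm (w - a)) t * ϱ w
      = (∫ w in {w : ℝ × ℝ | nrm (w - a) < exp (-t)}, ϱ w)
        - ∫ w in {w : ℝ × ℝ | exp t < nrm (w - a)}, ϱ w := by
  have hcont : Continuous fun w : ℝ × ℝ => nrm (w - a) := by fun_prop
  have hin : MeasurableSet {w : ℝ × ℝ | nrm (w - a) < exp (-t)} :=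
    measurableSet_lt hcont.measurable measurable_const
  have hout : MeasurableSet {w : ℝ × ℝ | exp t < nrm (w - a)} :=
    measurableSet_lt measurable_const hcont.measurable
  rw [← integral_indicator hin, ← integral_indicator hout,
    ← integral_sub (hint.indicator hin) (hint.indicator hout)]
  congr 1 with w
  simp only [logLayer, indicator_apply, mem_ofPred_eq]
  split_ifs <;> ring

end LayerCake

section RadiallyDecreasing

variable {ϱ : ℝ × ℝ → ℝ} (hint : Integrable ϱ) (hdec : ∀ x y : ℝ × ℝ, nrm x ≤ nrm y → ϱ y ≤ ϱ x)
include hint hdec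

lemma setIntegral_nrm_sub_mem_le (a : ℝ × ℝ) {r : ℝ} (hr : 0 ≤ r) {S : Set ℝ}
    (hS : MeasurableSet S) (hfin : volume {w : ℝ × ℝ | nrm w ∈ S} ≠ ⊤)
    (hS_le : ∀ s ∈ S, s ≤ r) (hS_ge : ∀ s, 0 ≤ s → s ∉ S → r ≤ s) :
    ∫ w in {w : ℝ × ℝ | nrm (w - a) ∈ S}, ϱ w ≤ ∫ w in {w : ℝ × ℝ | nrm w ∈ S}, ϱ w := by
  have hmeas : MeasurableSet {w : ℝ × ℝ | nrm w ∈ S} := continuous_nrm.measurable hS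
  have htrans : {w : ℝ × ℝ | nrm (w - a) ∈ S} = (· + -a) ⁻¹' {w | nrm w ∈ S} := by
    ext w; simp [sub_eq_add_neg]
  rw [htrans]
  refine setIntegral_le_setIntegral_of_measure_eq hint hmeas (measurable_add_const _ hmeas)
    (measure_preimage_add_right _ _ _) hfin (ϱ (r, 0)) (fun w hw => ?_) (fun w hw => ?_)
  · exact hdec _ _ ((nrm_mk_zero hr).symm ▸ hS_le _ hw)
  · exact hdec _ _ ((nrm_mk_zero hr).symm ▸ hS_ge _ (nrm_nonneg w) hw)

lemma setIntegral_nrm_sub_lt_le (a : ℝ × ℝ) {r : ℝ} (hr : 0 ≤ r) :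
    ∫ w in {w : ℝ × ℝ | nrm (w - a) < r}, ϱ w ≤ ∫ w in {w : ℝ × ℝ | nrm w < r}, ϱ w :=
  setIntegral_nrm_sub_mem_le hint hdec a hr measurableSet_Iio
    (ne_top_of_le_ne_top (volume_nrm_le_ne_top r) (measure_mono fun _ (hw : _ < r) => hw.le))
    (fun _ hs => le_of_lt hs) (fun _ _ hs => le_of_not_gt hs)

lemma setIntegral_nrm_sub_le_le (a : ℝ × ℝ) {r : ℝ} (hr : 0 ≤ r) :
    ∫ w in {w : ℝ × ℝ | nrm (w - a) ≤ r}, ϱ w ≤ ∫ w in {w : ℝ × ℝ | nrm w ≤ r}, ϱ w :=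
  setIntegral_nrm_sub_mem_le hint hdec a hr measurableSet_Iic (volume_nrm_le_ne_top r)
    (fun _ hs => hs) (fun _ _ hs => le_of_lt (not_le.1 hs))

lemma setIntegral_lt_nrm_le (a : ℝ × ℝ) {r : ℝ} (hr : 0 ≤ r) :
    ∫ w in {w : ℝ × ℝ | r < nrm w}, ϱ w ≤ ∫ w in {w : ℝ × ℝ | r < nrm (w - a)}, ϱ w := by
  have hcompl : {w : ℝ × ℝ | r < nrm (w - a)} = {w | nrm (w - a) ≤ r}ᶜ := by ext w; simp
  have hcompl0 : {w : ℝ × ℝ | r < nrm w} = {w | nrm w ≤ r}ᶜ := by ext w; simp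
  have hmeas : ∀ b : ℝ × ℝ, MeasurableSet {w : ℝ × ℝ | nrm (w - b) ≤ r} := fun b =>
    measurableSet_le (continuous_nrm.measurable.comp (measurable_sub_const b)) measurable_const
  have h0 := integral_add_compl (hmeas 0) hint
  have ha := integral_add_compl (hmeas a) hint
  simp only [sub_zero] at h0
  rw [← hcompl] at ha
  rw [← hcompl0] at h0
  linarith [setIntegral_nrm_sub_le_le hint hdec a hr]

lemma integral_logLayer_mul_le (a : ℝ × ℝ) (t : ℝ) :
    ∫ w, logLayer (nrm (w - a)) t * ϱ w ≤ ∫ w, logLayer (nrm w) t * ϱ w := by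
  have h0 := integral_logLayer_mul 0 hint t
  simp only [sub_zero] at h0
  rw [integral_logLayer_mul a hint, h0]
  exact sub_le_sub (setIntegral_nrm_sub_lt_le hint hdec a (exp_pos _).le)
    (setIntegral_lt_nrm_le hint hdec a (exp_pos _).le)

theorem integral_log_inv_nrm_sub_mul_le (a : ℝ × ℝ)
    (hK : Integrable fun w => log (1 / nrm (w - a)) * ϱ w)
    (hK₀ : Integrable fun w => log (1 / nrm w) * ϱ w) :
    ∫ w, log (1 / nrm (w - a)) * ϱ w ≤ ∫ w, log (1 / nrm w) * ϱ w := by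
  have hK₀' : Integrable fun w => log (1 / nrm (w - 0)) * ϱ w := by simpa only [sub_zero] using hK₀
  have hϱ := hint.aestronglyMeasurable
  have hlayers₀ := integral_log_mul_eq_integral_layers 0 hϱ hK₀'
  simp only [sub_zero] at hlayers₀
  rw [integral_log_mul_eq_integral_layers a hϱ hK, hlayers₀]
  have hint₀ := (integrable_logLayer_mul 0 hϱ hK₀').integral_prod_right
  simp only [Function.uncurry_apply_pair, sub_zero] at hint₀
  exact integral_mono (integrable_logLayer_mul a hϱ hK).integral_prod_right hint₀
    (integral_logLayer_mul_le hint hdec a)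

end RadiallyDecreasing

lemma integral_eq_sq_mul_integral_comp_smul_add (g : ℝ × ℝ → ℝ) {ε : ℝ} (hε : 0 < ε)
    (z : ℝ × ℝ) : ∫ y, g y = ε ^ 2 * ∫ w, g (ε • w + z) := by
  rw [Measure.integral_comp_smul_of_nonneg volume (fun v => g (v + z)) ε (hR := hε.le),
    integral_add_right_eq_self, Module.finrank_prod, Module.finrank_self, smul_eq_mul,
    ← mul_assoc, mul_inv_cancel₀ (by positivity), one_mul]

lemma sq_mul_log_scaled_kernel (ϱ : ℝ × ℝ → ℝ) {ε : ℝ} (hε : 0 < ε) (x z w : ℝ × ℝ) :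
    ε ^ 2 * (log (ε / nrm (x - (ε • w + z)))
      * (ε⁻¹ ^ 2 * ϱ (((ε • w + z).1 - z.1) / ε, ((ε • w + z).2 - z.2) / ε)))
      = log (1 / nrm (w - ε⁻¹ • (x - z))) * ϱ w := by
  have hsub : x - (ε • w + z) = ε • (ε⁻¹ • (x - z) - w) := by
    rw [smul_sub, smul_inv_smul₀ hε.ne']; abel
  have harg : (((ε • w + z).1 - z.1) / ε, ((ε • w + z).2 - z.2) / ε) = w := by
    ext <;> simp [hε.ne']
  rw [hsub, harg, nrm_smul hε.le, div_mul_eq_div_div, div_self hε.ne', nrm_sub_comm]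
  field_simp

theorem log_potential_upper_bound_general (ϱ : ℝ × ℝ → ℝ) (ε : ℝ) (z : ℝ × ℝ)
    (hε : 0 < ε)
    (hint : Integrable ϱ)
    (hlog : Integrable (fun y : ℝ × ℝ => Real.log (1 / nrm y) * ϱ y))
    (hdec : ∀ x y : ℝ × ℝ, nrm x ≤ nrm y → ϱ y ≤ ϱ x)
    (hintk : ∀ x : ℝ × ℝ, Integrable (fun y : ℝ × ℝ =>
        Real.log (ε / nrm (x - y)) * (ε⁻¹ ^ 2 * ϱ ((y.1 - z.1) / ε, (y.2 - z.2) / ε)))) :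
    ∀ x : ℝ × ℝ,
      (∫ y : ℝ × ℝ,
          Real.log (ε / nrm (x - y)) * (ε⁻¹ ^ 2 * ϱ ((y.1 - z.1) / ε, (y.2 - z.2) / ε)))
        ≤ ∫ y : ℝ × ℝ, Real.log (1 / nrm y) * ϱ y := by
  intro x
  have hK : Integrable fun w => log (1 / nrm (w - ε⁻¹ • (x - z))) * ϱ w :=
    (((hintk x).comp_add_right z).comp_smul hε.ne').const_mul (ε ^ 2) |>.congr <|
      Filter.Eventually.of_forall (sq_mul_log_scaled_kernel ϱ hε x z)
  rw [integral_eq_sq_mul_integral_comp_smul_add _ hε z, ← integral_const_mul]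
  simp only [sq_mul_log_scaled_kernel ϱ hε x z]
  exact integral_log_inv_nrm_sub_mul_le hint hdec _ hK hlog

theorem log_potential_upper_bound (ϱ : ℝ × ℝ → ℝ) (ε : ℝ) (z : ℝ × ℝ)
    (hε : 0 < ε) (hε1 : ε ≤ 1)
    (hnonneg : ∀ x, 0 ≤ ϱ x) (hint : Integrable ϱ)
    (hlog : Integrable (fun y : ℝ × ℝ => Real.log (1 / nrm y) * ϱ y))
    (hdec : ∀ x y : ℝ × ℝ, nrm x ≤ nrm y → ϱ y ≤ ϱ x)
    (hintk : ∀ x : ℝ × ℝ, Integrable (fun y : ℝ × ℝ =>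
        Real.log (ε / nrm (x - y)) * (ε⁻¹ ^ 2 * ϱ ((y.1 - z.1) / ε, (y.2 - z.2) / ε)))) :
    ∀ x : ℝ × ℝ,
      (∫ y : ℝ × ℝ,
          Real.log (ε / nrm (x - y)) * (ε⁻¹ ^ 2 * ϱ ((y.1 - z.1) / ε, (y.2 - z.2) / ε)))
        ≤ ∫ y : ℝ × ℝ, Real.log (1 / nrm y) * ϱ y :=
  log_potential_upper_bound_general ϱ ε z hε hint hlog hdec hintk
end

section
/- Let ζ ∈ L^p(Π) (p > 2) be nonnegative with support of measure at most πr²ε², and let φ⁺ ∈ H¹₀(Π) be nonnegative with support contained in the support of ζ, satisfying ∫_Π ζ φ⁺ dx = ∫_Π |∇φ⁺|² dx. If ‖ζ‖_{L^p(Π)} = ε^{2/p−2}‖ϱ‖_{L^p} for some fixed ϱ, then T := (1/2)∫_Π ζφ⁺ dx satisfies T ≤ C where C depends only on p, r, and ‖ϱ‖_{L^p}, but not on ε. -/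
/-!
Hölder gives `∫ ζ φ ≤ ‖ζ‖_p ‖φ‖_q` with `q = p / (p - 1) < 2`. Writing `S` for the support of `φ`,
`‖φ‖_q ≤ |S| ^ (1/q - 1/2) ‖φ‖_2`, and the two-dimensional Gagliardo–Nirenberg inequality
(bound `|φ (x, y)|` by the integral of `|∇φ|` over the horizontal line and over the vertical line
through `(x, y)`, and multiply) followed by Cauchy–Schwarz on `S` gives
`‖φ‖_2 ≤ ∫_S |∇φ| ≤ |S| ^ (1/2) ‖∇φ‖_2`. With `‖∇φ‖_2 ^ 2 = ∫ ζ φ = 2T` this reads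
`2T ≤ ‖ζ‖_p |S| ^ (1/q) √(2T)`, and for `‖ζ‖_p = ε ^ (2/p - 2) ‖ϱ‖_p`, `|S| ≤ π r² ε²` the powers
of `ε` cancel.
-/

open MeasureTheory Set
open scoped ENNReal

theorem exists_le_eq_zero_Ioc_subset_support {g : ℝ → ℝ} (hg : Continuous g) {x₀ x : ℝ}
    (hx₀ : x₀ ≤ x) (hgx₀ : g x₀ = 0) : ∃ a ≤ x, g a = 0 ∧ Ioc a x ⊆ Function.support g := by
  set Z := Icc x₀ x ∩ g ⁻¹' {0}
  have hZ : IsClosed Z := isClosed_Icc.inter (isClosed_singleton.preimage hg)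
  have hZne : Z.Nonempty := ⟨x₀, ⟨le_rfl, hx₀⟩, hgx₀⟩
  have hZbdd : BddAbove Z := bddAbove_Icc.mono inter_subset_left
  obtain ⟨⟨-, hax⟩, ha⟩ := hZ.csSup_mem hZne hZbdd
  refine ⟨sSup Z, hax, ha, fun t ht hgt => ht.1.not_ge (le_csSup hZbdd ⟨⟨?_, ht.2⟩, hgt⟩)⟩
  exact (le_csSup hZbdd ⟨⟨le_rfl, hx₀⟩, hgx₀⟩).trans ht.1.le

theorem enorm_sub_le_setLIntegral_enorm_deriv {g : ℝ → ℝ} (hg : Differentiable ℝ g) {a b : ℝ}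
    (hab : a ≤ b) : ‖g b - g a‖ₑ ≤ ∫⁻ t in Ioc a b, ‖deriv g t‖ₑ := by
  by_cases hint : IntegrableOn (deriv g) (Ioc a b)
  · rw [← intervalIntegral.integral_eq_sub_of_hasDerivAt (fun t _ => (hg t).hasDerivAt)
      ((intervalIntegrable_iff_integrableOn_Ioc_of_le hab).2 hint),
      intervalIntegral.integral_of_le hab]
    exact enorm_integral_le_lintegral_enorm _
  · have htop : ∫⁻ t in Ioc a b, ‖deriv g t‖ₑ = ∞ := by
      by_contra h
      exact hint ⟨(measurable_deriv g).aestronglyMeasurable, lt_top_iff_ne_top.2 h⟩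
    simp [htop]

theorem enorm_le_setLIntegral_support_enorm_deriv {g : ℝ → ℝ} (hg : Differentiable ℝ g)
    (hfin : volume (Function.support g) ≠ ∞) (x : ℝ) :
    ‖g x‖ₑ ≤ ∫⁻ t in Function.support g, ‖deriv g t‖ₑ := by
  obtain ⟨x₀, hx₀, hgx₀⟩ : ∃ x₀ ≤ x, g x₀ = 0 := by
    by_contra! h
    exact hfin (measure_mono_top (fun t (ht : t < x) => h t ht.le) Real.volume_Iio)
  obtain ⟨a, hax, hga, hsupp⟩ := exists_le_eq_zero_Ioc_subset_support hg.continuous hx₀ hgx₀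
  calc ‖g x‖ₑ = ‖g x - g a‖ₑ := by rw [hga, sub_zero]
    _ ≤ ∫⁻ t in Ioc a x, ‖deriv g t‖ₑ := enorm_sub_le_setLIntegral_enorm_deriv hg hax
    _ ≤ ∫⁻ t in Function.support g, ‖deriv g t‖ₑ := lintegral_mono_set hsupp

section
variable {E : Type*} [NormedAddCommGroup E] [NormedSpace ℝ E]

theorem enorm_deriv_comp_le_enorm_fderiv {φ : E → ℝ} {γ : ℝ → E} {v : E} {t : ℝ}
    (hφ : DifferentiableAt ℝ φ (γ t)) (hγ : HasDerivAt γ v t) (hv : ‖v‖ₑ ≤ 1) :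
    ‖deriv (fun s => φ (γ s)) t‖ₑ ≤ ‖fderiv ℝ φ (γ t)‖ₑ := by
  rw [← Function.comp_def, (hφ.hasFDerivAt.comp_hasDerivAt t hγ).deriv]
  simpa using (fderiv ℝ φ (γ t)).le_opENorm_of_le hv

theorem enorm_le_lintegral_indicator_enorm_fderiv_comp {φ : E → ℝ} (hφ : Differentiable ℝ φ)
    {γ : ℝ → E} {v : E} (hγ : ∀ t, HasDerivAt γ v t) (hv : ‖v‖ₑ ≤ 1)
    (hfin : volume (γ ⁻¹' Function.support φ) ≠ ∞) (t : ℝ) :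
    ‖φ (γ t)‖ₑ ≤ ∫⁻ s, (Function.support φ).indicator (fun z => ‖fderiv ℝ φ z‖ₑ) (γ s) := by
  have hγc : Continuous γ := continuous_iff_continuousAt.2 fun s => (hγ s).continuousAt
  have hS : MeasurableSet (γ ⁻¹' Function.support φ) :=
    (hφ.continuous.isOpen_support.preimage hγc).measurableSet
  have hg : Differentiable ℝ fun s => φ (γ s) := fun s => (hφ _).comp s (hγ s).differentiableAt
  calc ‖φ (γ t)‖ₑ ≤ ∫⁻ s in γ ⁻¹' Function.support φ, ‖deriv (fun s => φ (γ s)) s‖ₑ :=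
        enorm_le_setLIntegral_support_enorm_deriv hg hfin t
    _ ≤ ∫⁻ s in γ ⁻¹' Function.support φ, ‖fderiv ℝ φ (γ s)‖ₑ :=
        lintegral_mono fun s => enorm_deriv_comp_le_enorm_fderiv (hφ _) (hγ s) hv
    _ = _ := by rw [← lintegral_indicator hS]; rfl

end

theorem lintegral_enorm_sq_le_sq_setLIntegral_support_enorm_fderiv {φ : ℝ × ℝ → ℝ}
    (hφ : Differentiable ℝ φ) (hfin : volume (Function.support φ) ≠ ∞) :
    ∫⁻ z, ‖φ z‖ₑ ^ 2 ≤ (∫⁻ z in Function.support φ, ‖fderiv ℝ φ z‖ₑ) ^ 2 := by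
  set S := Function.support φ
  have hS : MeasurableSet S := hφ.continuous.isOpen_support.measurableSet
  set H := S.indicator fun z => ‖fderiv ℝ φ z‖ₑ
  have hH : Measurable H := (measurable_fderiv ℝ φ).enorm.indicator hS
  rw [Measure.volume_eq_prod] at hfin
  have hvert : ∀ᵐ x : ℝ, ∀ y, ‖φ (x, y)‖ₑ ≤ ∫⁻ s, H (x, s) := by
    filter_upwards [Measure.ae_measure_lt_top hS hfin] with x hx y
    exact enorm_le_lintegral_indicator_enorm_fderiv_comp hφ
      (fun s => (hasDerivAt_const s x).prodMk (hasDerivAt_id s))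
      (by simp [enorm_eq_nnnorm, Prod.nnnorm_def]) hx.ne y
  have hhoriz : ∀ᵐ y : ℝ, ∀ x, ‖φ (x, y)‖ₑ ≤ ∫⁻ t, H (t, y) := by
    rw [Measure.prod_apply_symm hS] at hfin
    filter_upwards [ae_lt_top (measurable_measure_prodMk_right hS) hfin] with y hy x
    exact enorm_le_lintegral_indicator_enorm_fderiv_comp hφ
      (fun t => (hasDerivAt_id t).prodMk (hasDerivAt_const t y))
      (by simp [enorm_eq_nnnorm, Prod.nnnorm_def]) hy.ne x
  calc ∫⁻ z, ‖φ z‖ₑ ^ 2 = ∫⁻ x, ∫⁻ y, ‖φ (x, y)‖ₑ ^ 2 := by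
        rw [Measure.volume_eq_prod, lintegral_prod _
          (hφ.continuous.measurable.enorm.pow_const 2).aemeasurable]
    _ ≤ ∫⁻ x, ∫⁻ y, (∫⁻ s, H (x, s)) * ∫⁻ t, H (t, y) :=
        lintegral_mono_ae <| hvert.mono fun x hx => lintegral_mono_ae <|
          hhoriz.mono fun y hy => by rw [sq]; exact mul_le_mul' (hx y) (hy x)
    _ = (∫⁻ z in S, ‖fderiv ℝ φ z‖ₑ) ^ 2 := by
        rw [← lintegral_indicator hS, Measure.volume_eq_prod, sq]
        nth_rw 1 [lintegral_prod _ hH.aemeasurable]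
        rw [lintegral_prod_symm _ hH.aemeasurable,
          ← lintegral_mul_const _ hH.lintegral_prod_right']
        simp_rw [← lintegral_const_mul _ hH.lintegral_prod_left']

section
variable {α E : Type*} [MeasurableSpace α] {μ : Measure α} [NormedAddCommGroup E]

theorem eLpNorm_restrict_le_eLpNorm_mul_rpow_measure {f : α → E} {p q : ℝ≥0∞} (hpq : p ≤ q)
    {s : Set α} (hf : AEStronglyMeasurable f (μ.restrict s)) :
    eLpNorm f p (μ.restrict s) ≤ eLpNorm f q μ * μ s ^ (1 / p.toReal - 1 / q.toReal) := by
  refine (eLpNorm_le_eLpNorm_mul_rpow_measure_univ hpq hf).trans ?_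
  rw [Measure.restrict_apply_univ]
  gcongr
  exact Measure.restrict_le_self

theorem eLpNorm_two_eq_ofReal_sqrt_integral_sq_norm {f : α → E}
    (hf : AEStronglyMeasurable f μ) (hf2 : Integrable (fun x => ‖f x‖ ^ 2) μ) :
    eLpNorm f 2 μ = ENNReal.ofReal √(∫ x, ‖f x‖ ^ 2 ∂μ) := by
  rw [((memLp_two_iff_integrable_sq_norm hf).2 hf2).eLpNorm_eq_integral_rpow_norm two_ne_zero
    ENNReal.ofNat_ne_top, Real.sqrt_eq_rpow]
  norm_num

theorem eLpNorm_one_eq_ofReal_integral {f : α → ℝ} (hf : Integrable f μ) (hf0 : ∀ x, 0 ≤ f x) :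
    eLpNorm f 1 μ = ENNReal.ofReal (∫ x, f x ∂μ) := by
  rw [eLpNorm_one_eq_lintegral_enorm, ← ofReal_integral_norm_eq_lintegral_enorm hf]
  simp_rw [Real.norm_of_nonneg (hf0 _)]

theorem eLpNorm_mul_le_mul_eLpNorm_of_aestronglyMeasurable_mul {p q r : ℝ≥0∞}
    [ENNReal.HolderTriple p q r] {f g : α → ℝ} (hg : AEStronglyMeasurable g μ)
    (hfg : AEStronglyMeasurable (f * g) μ) :
    eLpNorm (f * g) r μ ≤ eLpNorm f p μ * eLpNorm g q μ := by
  -- `f` need not be measurable, but `f * g / g` is, has the same product with `g`, and is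
  -- dominated by `f`.
  have hfg_div_mul : f * g / g * g = f * g := by
    ext x
    by_cases hx : g x = 0 <;> simp [hx]
  calc eLpNorm (f * g) r μ = eLpNorm (f * g / g * g) r μ := by rw [hfg_div_mul]
    _ ≤ eLpNorm (f * g / g) p μ * eLpNorm g q μ :=
        eLpNorm_smul_le_mul_eLpNorm (𝕜 := ℝ) (φ := f * g / g) hg
          (hfg.aemeasurable.div hg.aemeasurable).aestronglyMeasurable
    _ ≤ eLpNorm f p μ * eLpNorm g q μ := by
        gcongr
        refine eLpNorm_mono fun x => ?_
        by_cases hx : g x = 0 <;> simp [hx]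

end

theorem eLpNorm_le_measure_support_rpow_mul_eLpNorm_fderiv {φ : ℝ × ℝ → ℝ}
    (hφ : Differentiable ℝ φ) (hfin : volume (Function.support φ) ≠ ∞) {q : ℝ≥0∞} (hq : q ≤ 2) :
    eLpNorm φ q volume ≤
      volume (Function.support φ) ^ (1 / q.toReal) * eLpNorm (fderiv ℝ φ) 2 volume := by
  obtain rfl | hq0 := eq_or_ne q 0
  · simp
  set S := Function.support φ
  have hS : MeasurableSet S := hφ.continuous.isOpen_support.measurableSet
  have hgrid : eLpNorm φ 2 volume ≤ eLpNorm (fderiv ℝ φ) 1 (volume.restrict S) := by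
    rw [eLpNorm_one_eq_lintegral_enorm,
      eLpNorm_eq_lintegral_rpow_enorm_toReal two_ne_zero ENNReal.ofNat_ne_top]
    calc (∫⁻ z, ‖φ z‖ₑ ^ (2 : ℝ≥0∞).toReal) ^ (1 / (2 : ℝ≥0∞).toReal)
        ≤ ((∫⁻ z in S, ‖fderiv ℝ φ z‖ₑ) ^ (2 : ℝ)) ^ (1 / (2 : ℝ)) := by
          simp only [ENNReal.toReal_ofNat, ENNReal.rpow_two]
          gcongr
          exact lintegral_enorm_sq_le_sq_setLIntegral_support_enorm_fderiv hφ hfin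
      _ = ∫⁻ z in S, ‖fderiv ℝ φ z‖ₑ := by rw [← ENNReal.rpow_mul]; norm_num
  have hq' : 0 ≤ 1 / q.toReal - 1 / 2 := by
    have hq_top : q ≠ ∞ := ne_top_of_le_ne_top ENNReal.ofNat_ne_top hq
    have hq_le : q.toReal ≤ 2 := ENNReal.toReal_le_of_le_ofReal zero_le_two (by simpa using hq)
    exact sub_nonneg.2 (one_div_le_one_div_of_le (ENNReal.toReal_pos hq0 hq_top) hq_le)
  calc eLpNorm φ q volume = eLpNorm φ q (volume.restrict S) :=
        (eLpNorm_restrict_eq_of_support_subset subset_rfl).symm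
    _ ≤ eLpNorm φ 2 volume * volume S ^ (1 / q.toReal - 1 / 2) := by
        simpa using eLpNorm_restrict_le_eLpNorm_mul_rpow_measure hq
          hφ.continuous.aestronglyMeasurable
    _ ≤ eLpNorm (fderiv ℝ φ) 2 volume * volume S ^ (1 / 2 : ℝ) *
          volume S ^ (1 / q.toReal - 1 / 2) := by
        gcongr
        refine hgrid.trans ((eLpNorm_restrict_le_eLpNorm_mul_rpow_measure one_le_two
          (measurable_fderiv ℝ φ).aestronglyMeasurable).trans_eq ?_)
        norm_num
    _ = volume S ^ (1 / q.toReal) * eLpNorm (fderiv ℝ φ) 2 volume := by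
        rw [mul_assoc, ← ENNReal.rpow_add_of_nonneg _ _ (by norm_num) hq', mul_comm]
        ring_nf

theorem eLpNorm_one_mul_le_measure_support_rpow_mul_eLpNorm_fderiv {p q : ℝ≥0∞}
    [p.HolderConjugate q] (hq : q ≤ 2) {ζ φ : ℝ × ℝ → ℝ} (hφ : Differentiable ℝ φ)
    (hfin : volume (Function.support φ) ≠ ∞) (hζφ : AEStronglyMeasurable (ζ * φ) volume) :
    eLpNorm (ζ * φ) 1 volume ≤ eLpNorm ζ p volume * volume (Function.support φ) ^ (1 / q.toReal) *
      eLpNorm (fderiv ℝ φ) 2 volume := by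
  rw [mul_assoc]
  calc eLpNorm (ζ * φ) 1 volume ≤ eLpNorm ζ p volume * eLpNorm φ q volume :=
        eLpNorm_mul_le_mul_eLpNorm_of_aestronglyMeasurable_mul
          hφ.continuous.aestronglyMeasurable hζφ
    _ ≤ _ := by grw [eLpNorm_le_measure_support_rpow_mul_eLpNorm_fderiv hφ hfin hq]

theorem Real.HolderConjugate.rpow_two_div_sub_two_mul_mul_sq_rpow {p q : ℝ}
    (hpq : p.HolderConjugate q) {ε : ℝ} (hε : 0 < ε) {m : ℝ} (hm : 0 ≤ m) :
    ε ^ (2 / p - 2) * (m * ε ^ 2) ^ (1 / q) = m ^ (1 / q) := by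
  have hexp : 2 / p - 2 + (2 : ℕ) * (1 / q) = 0 := by
    push_cast
    linear_combination (2 : ℝ) * hpq.inv_add_inv_eq_one
  rw [Real.mul_rpow hm (by positivity), ← Real.rpow_natCast ε 2, ← Real.rpow_mul hε.le,
    mul_left_comm, ← Real.rpow_add hε, hexp, Real.rpow_zero, mul_one]

theorem Real.HolderConjugate.ofReal_rpow_mul_mul_rpow_le {p q : ℝ} (hpq : p.HolderConjugate q)
    {ε : ℝ} (hε : 0 < ε) (A : ℝ) {m : ℝ} (hm : 0 ≤ m) {s : ℝ≥0∞}
    (hs : s ≤ ENNReal.ofReal (m * ε ^ 2)) :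
    ENNReal.ofReal (ε ^ (2 / p - 2) * A) * s ^ (1 / q) ≤ ENNReal.ofReal (A * m ^ (1 / q)) := by
  have hq : 0 ≤ 1 / q := one_div_nonneg.2 hpq.symm.nonneg
  calc ENNReal.ofReal (ε ^ (2 / p - 2) * A) * s ^ (1 / q)
      ≤ ENNReal.ofReal (ε ^ (2 / p - 2) * A) * ENNReal.ofReal (m * ε ^ 2) ^ (1 / q) := by gcongr
    _ = ENNReal.ofReal (A * (ε ^ (2 / p - 2) * (m * ε ^ 2) ^ (1 / q))) := by
        rw [ENNReal.ofReal_rpow_of_nonneg (by positivity) hq,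
          ← ENNReal.ofReal_mul' (by positivity)]
        ring_nf
    _ = ENNReal.ofReal (A * m ^ (1 / q)) := by
        rw [hpq.rpow_two_div_sub_two_mul_mul_sq_rpow hε hm]

theorem Real.le_sq_of_le_mul_sqrt {x c : ℝ} (h : x ≤ c * √x) : x ≤ c ^ 2 := by
  rcases le_or_gt x 0 with hx | hx
  · nlinarith [sq_nonneg c]
  · nlinarith [sq_nonneg (c - √x), Real.sq_sqrt hx.le, Real.sqrt_nonneg x]

theorem kinetic_energy_core_uniform_bound_general (p r A : ℝ)
    (hp : 2 < p) :
    ∃ C : ℝ, 0 < C ∧ ∀ (ε : ℝ) (ζ φ : ℝ × ℝ → ℝ), 0 < ε →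
      (∀ x, 0 ≤ ζ x) → (∀ x, 0 ≤ φ x) → Differentiable ℝ φ →
      Function.support ζ ⊆ UHP →
      Function.support φ ⊆ Function.support ζ →
      volume (Function.support ζ) ≤ ENNReal.ofReal (Real.pi * r ^ 2 * ε ^ 2) →
      eLpNorm ζ (ENNReal.ofReal p) volume = ENNReal.ofReal (ε ^ (2 / p - 2) * A) →
      Integrable (fun x => ζ x * φ x) →
      Integrable (fun x : ℝ × ℝ => ‖fderiv ℝ φ x‖ ^ 2) →
      (∫ x : ℝ × ℝ, ζ x * φ x) = ∫ x : ℝ × ℝ, ‖fderiv ℝ φ x‖ ^ 2 →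
      (1 / 2) * ∫ x : ℝ × ℝ, ζ x * φ x ≤ C := by
  set q := p.conjExponent
  have hpq : p.HolderConjugate q := .conjExponent (by linarith)
  have hq2 : q ≤ 2 := by
    show p / (p - 1) ≤ 2
    rw [div_le_iff₀ (by linarith)]
    linarith
  have := hpq.ennrealOfReal
  set c := A * (Real.pi * r ^ 2) ^ (1 / q)
  refine ⟨c ^ 2 + 1, by positivity, ?_⟩
  intro ε ζ φ hε hζ hφ hφd _ hsupp hvol hnorm hint hDint henergy
  have hS : volume (Function.support φ) ≤ ENNReal.ofReal (Real.pi * r ^ 2 * ε ^ 2) :=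
    (measure_mono hsupp).trans hvol
  have hkey : ENNReal.ofReal (∫ x, ζ x * φ x) ≤
      ENNReal.ofReal c * ENNReal.ofReal √(∫ x, ζ x * φ x) := calc
    _ = eLpNorm (ζ * φ) 1 volume :=
        (eLpNorm_one_eq_ofReal_integral hint fun x => mul_nonneg (hζ x) (hφ x)).symm
    _ ≤ eLpNorm ζ (ENNReal.ofReal p) volume * volume (Function.support φ) ^ (1 / q) *
          eLpNorm (fderiv ℝ φ) 2 volume := by
        simpa [ENNReal.toReal_ofReal hpq.symm.nonneg] using
          eLpNorm_one_mul_le_measure_support_rpow_mul_eLpNorm_fderiv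
            (q := ENNReal.ofReal q) (by simpa using hq2) hφd
            (hS.trans_lt ENNReal.ofReal_lt_top).ne hint.aestronglyMeasurable
    _ ≤ _ := by
        rw [hnorm, eLpNorm_two_eq_ofReal_sqrt_integral_sq_norm
          (measurable_fderiv ℝ φ).aestronglyMeasurable hDint, ← henergy]
        gcongr
        exact hpq.ofReal_rpow_mul_mul_rpow_le hε A (by positivity) hS
  rw [← ENNReal.ofReal_mul' (Real.sqrt_nonneg _)] at hkey
  rcases ENNReal.ofReal_le_ofReal_iff'.1 hkey with h | h
  · linarith [Real.le_sq_of_le_mul_sqrt h, sq_nonneg c]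
  · linarith [sq_nonneg c]

theorem kinetic_energy_core_uniform_bound (p r A : ℝ)
    (hp : 2 < p) (hr : 0 < r) (hA : 0 ≤ A) :
    ∃ C : ℝ, 0 < C ∧ ∀ (ε : ℝ) (ζ φ : ℝ × ℝ → ℝ), 0 < ε →
      (∀ x, 0 ≤ ζ x) → (∀ x, 0 ≤ φ x) → Differentiable ℝ φ →
      Function.support ζ ⊆ UHP →
      Function.support φ ⊆ Function.support ζ →
      volume (Function.support ζ) ≤ ENNReal.ofReal (Real.pi * r ^ 2 * ε ^ 2) →
      eLpNorm ζ (ENNReal.ofReal p) volume = ENNReal.ofReal (ε ^ (2 / p - 2) * A) →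
      Integrable (fun x => ζ x * φ x) →
      Integrable (fun x : ℝ × ℝ => ‖fderiv ℝ φ x‖ ^ 2) →
      (∫ x : ℝ × ℝ, ζ x * φ x) = ∫ x : ℝ × ℝ, ‖fderiv ℝ φ x‖ ^ 2 →
      (1 / 2) * ∫ x : ℝ × ℝ, ζ x * φ x ≤ C :=
  kinetic_energy_core_uniform_bound_general p r A hp
end

section
/- Let ζ be a nonnegative integrable function on Π with ∫_Π ζ = κ and center of mass at x̂ = (0, i₀/κ) (i.e., ∫_Π x ζ(x) dx = κ x̂), and suppose supp(ζ) ⊆ B_δ(x̂) for some 0 < δ < i₀/(2κ). Then the quantity λ(ζ) := (1/(2πκ)) ∬_{Π×Π} ((x₂ + y₂)/|x − ȳ|²) ζ(x) ζ(y) dx dy satisfies |λ(ζ) − κ²/(4π i₀)| ≤ C δ for a constant C depending only on κ and i₀. -/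
/-! On the support of `ζ` both `x` and `y` lie within `δ` of `x̂ = (0, a)`, `a = i₀ / κ`, where the
kernel `(x₂ + y₂) / |x - ȳ|²` equals `1 / (2a)`; there it deviates from that value by at most
`4δ / a²`. Integrating the deviation against `ζ(x) ζ(y)`, a measure of total mass `κ²`, gives
`|λ(ζ) - κ² / (4π i₀)| ≤ (1 / (2πκ)) · (4δ / a²) · κ² = 2κ³ δ / (π i₀²)`. -/

open MeasureTheory

section KernelAverage

variable {α : Type*} [MeasurableSpace α] {μ : Measure α} {f g : α → ℝ} {c ε m : ℝ}

theorem abs_integral_mul_sub_const_mul_le (hf₀ : ∀ x, 0 ≤ f x) (hf : Integrable f μ)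
    (hfm : ∫ x, f x ∂μ = m) (hg : AEStronglyMeasurable g μ)
    (hgc : ∀ x, f x ≠ 0 → |g x - c| ≤ ε) :
    |∫ x, g x * f x ∂μ - c * m| ≤ ε * m := by
  have hdev : ∀ x, ‖(g x - c) * f x‖ ≤ ε * f x := by
    intro x
    by_cases hx : f x = 0
    · simp [hx]
    · rw [Real.norm_eq_abs, abs_mul, abs_of_nonneg (hf₀ x)]
      exact mul_le_mul_of_nonneg_right (hgc x hx) (hf₀ x)
  have hdev_int : Integrable (fun x => (g x - c) * f x) μ :=
    (hf.const_mul ε).mono' ((hg.sub aestronglyMeasurable_const).mul hf.1)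
      (.of_forall hdev)
  have hsplit : ∫ x, g x * f x ∂μ - c * m = ∫ x, (g x - c) * f x ∂μ := by
    simp_rw [sub_mul]
    rw [integral_sub _ (hf.const_mul c), integral_const_mul, hfm]
    refine (hdev_int.add (hf.const_mul c)).congr (.of_forall fun x => ?_)
    simp only [Pi.add_apply]
    ring
  calc |∫ x, g x * f x ∂μ - c * m| = ‖∫ x, (g x - c) * f x ∂μ‖ := by
        rw [hsplit, Real.norm_eq_abs]
    _ ≤ ∫ x, ε * f x ∂μ := norm_integral_le_of_norm_le (hf.const_mul ε) (.of_forall hdev)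
    _ = ε * m := by rw [integral_const_mul, hfm]

theorem abs_integral_integral_mul_sub_const_mul_sq_le [SFinite μ] {K : α → α → ℝ}
    (hf₀ : ∀ x, 0 ≤ f x) (hf : Integrable f μ) (hfm : ∫ x, f x ∂μ = m)
    (hK : Measurable (Function.uncurry K))
    (hKc : ∀ x y, f x ≠ 0 → f y ≠ 0 → |K x y - c| ≤ ε) :
    |∫ x, ∫ y, K x y * f x * f y ∂μ ∂μ - c * m ^ 2| ≤ ε * m ^ 2 := by
  have hinner : AEStronglyMeasurable (fun x => ∫ y, K x y * f y ∂μ) μ :=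
    (hK.aestronglyMeasurable.mul hf.1.comp_snd).integral_prod_right'
  have houter := abs_integral_mul_sub_const_mul_le hf₀ hf hfm hinner fun x hx =>
    abs_integral_mul_sub_const_mul_le hf₀ hf hfm
      (hK.comp measurable_prodMk_left).aestronglyMeasurable (hKc x · hx)
  have hfactor : ∀ x, ∫ y, K x y * f x * f y ∂μ = (∫ y, K x y * f y ∂μ) * f x := by
    intro x
    rw [← integral_mul_const]
    congr 1 with y
    ring
  simp_rw [hfactor]
  simpa only [mul_assoc, ← sq] using houter

end KernelAverage

theorem nrm_sq (z : ℝ × ℝ) : nrm z ^ 2 = z.1 ^ 2 + z.2 ^ 2 := Real.sq_sqrt (by positivity)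

theorem abs_fst_le_nrm (z : ℝ × ℝ) : |z.1| ≤ nrm z :=
  Real.abs_le_sqrt (le_add_of_nonneg_right (sq_nonneg z.2))

theorem abs_snd_le_nrm_s15 (z : ℝ × ℝ) : |z.2| ≤ nrm z :=
  Real.abs_le_sqrt (le_add_of_nonneg_left (sq_nonneg z.1))

theorem abs_div_sq_add_sq_sub_inv_le {a δ u s : ℝ} (hδa : δ < a / 2) (hu : |u| ≤ 2 * δ)
    (hs : |s - 2 * a| ≤ 2 * δ) : |s / (u ^ 2 + s ^ 2) - 1 / (2 * a)| ≤ 4 * δ / a ^ 2 := by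
  have hδ : 0 ≤ δ := by linarith [abs_nonneg u]
  have ha : 0 < a := by linarith
  rw [abs_le] at hs
  have hu2 : u ^ 2 ≤ 4 * δ ^ 2 := by nlinarith [sq_abs u, abs_nonneg u]
  have hd : a ^ 2 ≤ u ^ 2 + s ^ 2 := by nlinarith
  -- `2as - (u² + s²) = s (2a - s) - u²`, with `s ≤ 3a`, `|2a - s| ≤ 2δ` and `u² ≤ 2aδ`.
  have hnum : |s * (2 * a) - (u ^ 2 + s ^ 2)| ≤ 8 * a * δ := by
    rw [abs_le]; constructor <;> nlinarith
  calc |s / (u ^ 2 + s ^ 2) - 1 / (2 * a)|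
      = |s * (2 * a) - (u ^ 2 + s ^ 2)| / ((u ^ 2 + s ^ 2) * (2 * a)) := by
        have hd₀ : 0 < u ^ 2 + s ^ 2 := lt_of_lt_of_le (by positivity) hd
        rw [div_sub_div _ _ hd₀.ne' (by positivity), abs_div, mul_one,
          abs_of_pos (mul_pos hd₀ (by positivity))]
    _ ≤ 8 * a * δ / (a ^ 2 * (2 * a)) := by gcongr
    _ = 4 * δ / a ^ 2 := by field_simp; ring

noncomputable def reflectionKernel (x y : ℝ × ℝ) : ℝ := (x.2 + y.2) / nrm (x - (y.1, -y.2)) ^ 2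

theorem reflectionKernel_eq (x y : ℝ × ℝ) :
    reflectionKernel x y = (x.2 + y.2) / ((x.1 - y.1) ^ 2 + (x.2 + y.2) ^ 2) := by
  rw [reflectionKernel, nrm_sq, Prod.fst_sub, Prod.snd_sub, sub_neg_eq_add]

theorem measurable_reflectionKernel : Measurable (Function.uncurry reflectionKernel) := by
  simp only [Function.uncurry_def, reflectionKernel_eq]
  fun_prop

theorem abs_reflectionKernel_sub_le {a δ : ℝ} {x y : ℝ × ℝ} (hδa : δ < a / 2)
    (hx : nrm (x - (0, a)) ≤ δ) (hy : nrm (y - (0, a)) ≤ δ) :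
    |reflectionKernel x y - 1 / (2 * a)| ≤ 4 * δ / a ^ 2 := by
  have hx₁ : |x.1| ≤ δ := by simpa using (abs_fst_le_nrm _).trans hx
  have hy₁ : |y.1| ≤ δ := by simpa using (abs_fst_le_nrm _).trans hy
  have hx₂ : |x.2 - a| ≤ δ := by simpa using (abs_snd_le_nrm_s15 _).trans hx
  have hy₂ : |y.2 - a| ≤ δ := by simpa using (abs_snd_le_nrm_s15 _).trans hy
  rw [reflectionKernel_eq]
  refine abs_div_sq_add_sq_sub_inv_le hδa ?_ ?_
  · exact (abs_sub _ _).trans (by linarith)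
  · rw [show x.2 + y.2 - 2 * a = (x.2 - a) + (y.2 - a) by ring]
    exact (abs_add_le _ _).trans (by linarith)

theorem traveling_speed_near_limit (κ i₀ : ℝ) (hκ : 0 < κ) (hi₀ : 0 < i₀) :
    ∃ C : ℝ, 0 < C ∧ ∀ (ζ : ℝ × ℝ → ℝ) (δ : ℝ), 0 < δ → δ < i₀ / (2 * κ) →
      (∀ x, 0 ≤ ζ x) → IntegrableOn ζ UHP →
      (∫ x in UHP, ζ x) = κ →
      (∫ x in UHP, x.1 * ζ x) = 0 →
      (∫ x in UHP, x.2 * ζ x) = i₀ →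
      Function.support ζ ⊆ {x : ℝ × ℝ | nrm (x - (0, i₀ / κ)) ≤ δ} →
      |(1 / (2 * Real.pi * κ)) * (∫ x in UHP, ∫ y in UHP,
          (x.2 + y.2) / nrm (x - (y.1, -y.2)) ^ 2 * ζ x * ζ y)
        - κ ^ 2 / (4 * Real.pi * i₀)| ≤ C * δ := by
  refine ⟨2 * κ ^ 3 / (Real.pi * i₀ ^ 2), by positivity, ?_⟩
  intro ζ δ _ hδ hζ₀ hζ hmass _ _ hsupp
  have hδa : δ < i₀ / κ / 2 := by rwa [div_div, mul_comm]
  have hdouble := abs_integral_integral_mul_sub_const_mul_sq_le hζ₀ hζ hmass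
    measurable_reflectionKernel fun x y hx hy =>
      abs_reflectionKernel_sub_le hδa (hsupp hx) (hsupp hy)
  have hlimit : κ ^ 2 / (4 * Real.pi * i₀)
      = 1 / (2 * Real.pi * κ) * (1 / (2 * (i₀ / κ)) * κ ^ 2) := by
    field_simp
    ring
  rw [hlimit, ← mul_sub, abs_mul, abs_of_pos (by positivity)]
  calc _ ≤ 1 / (2 * Real.pi * κ) * (4 * δ / (i₀ / κ) ^ 2 * κ ^ 2) := by gcongr; exact hdouble
    _ = 2 * κ ^ 3 / (Real.pi * i₀ ^ 2) * δ := by field_simp; ring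
end
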